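/- Let N ≥ 0 and let X be a scheme equipped with a closed immersion into the projective space ℙ^N over the real numbers ℝ (the Proj of the polynomial ring ℝ[x₀, …, x_N] with its standard grading). Then there exists an affine open subscheme U of X such that every ℝ-point of X (i.e. every scheme morphism Spec ℝ → X) factors through the open immersion U → X; in particular U(ℝ) = X(ℝ). -/

import Mathlib

open AlgebraicGeometry CategoryTheory

/-- Projective `N`-space over `ℝ`, namely `Proj` of the polynomial ring
`ℝ[x₀, …, x_N]` with its standard grading by homogeneous degree. -/
noncomputable def RealProjectiveSpace (N : ℕ) : Scheme :=
  letI := MvPolynomial.gradedAlgebra (σ := Fin (N + 1)) (R := ℝ)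
  Proj (MvPolynomial.homogeneousSubmodule (Fin (N + 1)) ℝ)

/-- A homogeneous polynomial of positive degree lies in the ideal generated by
the variables. -/
lemma aux_mem_span_X {σ : Type*} {n : ℕ} (hn : n ≠ 0)
    (q : MvPolynomial σ ℝ) (hq : q.IsHomogeneous n) :
    q ∈ Ideal.span (Set.range (MvPolynomial.X (R := ℝ) (σ := σ))) := by
  classical
  rw [q.as_sum]
  refine Ideal.sum_mem _ fun d hd => ?_
  obtain ⟨i, hi⟩ : ∃ i, d i ≠ 0 := by
    by_contra h
    push_neg at h
    have hd0 : d = 0 := Finsupp.ext h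
    apply hn
    have := hq (MvPolynomial.mem_support_iff.mp hd)
    subst hd0
    simpa using this.symm
  have key : MvPolynomial.monomial d (MvPolynomial.coeff d q) =
      MvPolynomial.monomial (d - Finsupp.single i 1) (MvPolynomial.coeff d q) *
        MvPolynomial.X i := by
    rw [show (MvPolynomial.X i : MvPolynomial σ ℝ) = MvPolynomial.X i ^ 1 from (pow_one _).symm,
      MvPolynomial.X_pow_eq_monomial, MvPolynomial.monomial_mul, mul_one,
      tsub_add_cancel_of_le (Finsupp.single_le_iff.mpr (Nat.one_le_iff_ne_zero.mpr hi))]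
  rw [key]
  exact Ideal.mul_mem_left _ _ (Ideal.subset_span ⟨i, rfl⟩)

/-- If `X` is a scheme equipped with a closed immersion into projective space
`ℙ^N_ℝ`, then there is an affine open subscheme `U ⊆ X` through which every
`ℝ`-point `Spec ℝ → X` of `X` factors; in particular `U(ℝ) = X(ℝ)`. -/
theorem stmt_7 (N : ℕ) (X : Scheme) (f : X ⟶ RealProjectiveSpace N)
    [IsClosedImmersion f] :
    ∃ U : X.Opens, IsAffineOpen U ∧
      ∀ p : Spec (CommRingCat.of ℝ) ⟶ X,
        ∃ q : Spec (CommRingCat.of ℝ) ⟶ U.toScheme, q ≫ U.ι = p := by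
  classical
  letI := MvPolynomial.gradedAlgebra (σ := Fin (N + 1)) (R := ℝ)
  let 𝒜 := MvPolynomial.homogeneousSubmodule (Fin (N + 1)) ℝ
  have h𝒜 : 𝒜 = MvPolynomial.homogeneousSubmodule (Fin (N + 1)) ℝ := rfl
  set s : MvPolynomial (Fin (N + 1)) ℝ := ∑ i, MvPolynomial.X i ^ 2 with hsdef
  have hs : s ∈ 𝒜 2 := by
    rw [h𝒜, MvPolynomial.mem_homogeneousSubmodule]
    exact MvPolynomial.IsHomogeneous.sum _ _ _ fun i _ =>
      MvPolynomial.isHomogeneous_X_pow _ _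
  have hXm : ∀ i : Fin (N + 1), MvPolynomial.X (R := ℝ) i ∈ 𝒜 1 := fun i => by
    rw [h𝒜, MvPolynomial.mem_homogeneousSubmodule]
    exact MvPolynomial.isHomogeneous_X _ _
  set V : (Proj 𝒜).Opens := Proj.basicOpen 𝒜 s with hVdef
  have hV : IsAffineOpen V := Proj.isAffineOpen_basicOpen 𝒜 s hs two_pos
  haveI : IsLocalRing (CommRingCat.of ℝ) := inferInstanceAs (IsLocalRing ℝ)
  have key : ∀ g : Spec (CommRingCat.of ℝ) ⟶ Proj 𝒜, ∀ z, g.base z ∈ V := by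
    intro g z
    obtain rfl : z = IsLocalRing.closedPoint (CommRingCat.of ℝ) := Subsingleton.elim _ _
    set y := g.base (IsLocalRing.closedPoint (CommRingCat.of ℝ)) with hy
    rw [hVdef, Proj.mem_basicOpen]
    intro hsy
    haveI := y.isPrime
    set P := y.asHomogeneousIdeal.toIdeal with hP
    -- find a variable not in the homogeneous prime
    obtain ⟨j, hj⟩ : ∃ j, MvPolynomial.X (R := ℝ) j ∉ y.asHomogeneousIdeal := by
      by_contra h
      push_neg at h
      refine y.not_irrelevant_le fun z hz => ?_
      have hspan : Ideal.span (Set.range (MvPolynomial.X (R := ℝ) (σ := Fin (N + 1)))) ≤ P :=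
        Ideal.span_le.mpr (by rintro _ ⟨i, rfl⟩; exact h i)
      show z ∈ P
      rw [← DirectSum.sum_support_decompose 𝒜 z]
      refine Ideal.sum_mem _ fun c hc => ?_
      by_cases hc0 : c = 0
      · subst hc0
        have h0 : (DirectSum.decompose 𝒜 z 0 : MvPolynomial (Fin (N + 1)) ℝ) = 0 :=
          (HomogeneousIdeal.mem_irrelevant_iff 𝒜 z).mp hz
        rw [h0]
        exact Ideal.zero_mem _
      · exact hspan (aux_mem_span_X hc0 _
          ((MvPolynomial.mem_homogeneousSubmodule _ _).mp (SetLike.coe_mem _)))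
    have hjP : MvPolynomial.X (R := ℝ) j ∈ P.primeCompl := hj
    have hj2 : MvPolynomial.X (R := ℝ) j ^ 2 ∈ 𝒜 2 := by
      rw [h𝒜, MvPolynomial.mem_homogeneousSubmodule]
      exact MvPolynomial.isHomogeneous_X_pow _ _
    have hj2P : MvPolynomial.X (R := ℝ) j ^ 2 ∈ P.primeCompl := fun hmem =>
      hj (y.isPrime.mem_of_pow_mem 2 hmem)
    set u : HomogeneousLocalization.AtPrime 𝒜 P :=
      HomogeneousLocalization.mk ⟨2, ⟨s, hs⟩, ⟨_, hj2⟩, hj2P⟩ with hu_def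
    set w : Fin (N + 1) → HomogeneousLocalization.AtPrime 𝒜 P := fun i =>
      HomogeneousLocalization.mk ⟨1, ⟨MvPolynomial.X i, hXm i⟩, ⟨MvPolynomial.X j, hXm j⟩, hjP⟩
      with hw_def
    have hu : ¬ IsUnit u := by
      rw [← HomogeneousLocalization.isUnit_iff_isUnit_val, hu_def,
        HomogeneousLocalization.val_mk, Localization.mk_eq_mk',
        IsLocalization.AtPrime.isUnit_mk'_iff]
      exact fun hmem => hmem hsy
    have hwj : w j = 1 := by
      apply HomogeneousLocalization.val_injective
      rw [hw_def, HomogeneousLocalization.val_mk, HomogeneousLocalization.val_one]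
      exact Localization.mk_self (⟨MvPolynomial.X j, hjP⟩ : P.primeCompl)
    have hw : u = ∑ i, w i ^ 2 := by
      apply HomogeneousLocalization.val_injective
      have hval := map_sum
          (algebraMap (HomogeneousLocalization.AtPrime 𝒜 P) (Localization P.primeCompl))
          (fun i => w i ^ 2) Finset.univ
      simp only [HomogeneousLocalization.algebraMap_apply,
        HomogeneousLocalization.val_pow] at hval
      rw [hval, hu_def, HomogeneousLocalization.val_mk]
      have hstep : ∀ i : Fin (N + 1), ((w i).val) ^ 2 =
          (MvPolynomial.X (R := ℝ) i ^ 2) •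
            Localization.mk 1 ((⟨MvPolynomial.X j, hjP⟩ : P.primeCompl) ^ 2) := by
        intro i
        rw [hw_def, HomogeneousLocalization.val_mk, Localization.mk_pow,
          Localization.smul_mk, smul_eq_mul, mul_one]
      rw [Finset.sum_congr rfl fun i _ => hstep i, ← Finset.sum_smul,
        Localization.smul_mk, smul_eq_mul, mul_one,
        show ((⟨MvPolynomial.X j, hjP⟩ : P.primeCompl) ^ 2) =
          (⟨MvPolynomial.X j ^ 2, hj2P⟩ : P.primeCompl) from Subtype.ext (by simp)]
    -- the evaluation map to ℝ coming from the ℝ-point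
    set φc : (Proj 𝒜).presheaf.stalk y ⟶ CommRingCat.of ℝ :=
      Scheme.stalkClosedPointTo g with hφc
    set φ : CommRingCat.of (HomogeneousLocalization.AtPrime 𝒜 P) ⟶ CommRingCat.of ℝ :=
      (Proj.stalkIso 𝒜 y).inv ≫ φc with hφ
    have hφu : ¬ IsUnit (φ u) := by
      intro h
      apply hu
      have h1 : IsUnit (((Proj.stalkIso 𝒜 y).inv : _ ⟶ _) u) :=
        isUnit_of_map_unit φc.hom _ h
      have h2 := h1.map ((Proj.stalkIso 𝒜 y).hom.hom)
      simpa using h2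
    have hφu0 : φ u = 0 := by
      by_contra h
      exact hφu (isUnit_iff_ne_zero.mpr h)
    have hsum : (0 : ℝ) = ∑ i, (φ (w i)) ^ 2 := by
      rw [← hφu0, hw, map_sum]
      exact Finset.sum_congr rfl fun i _ => by rw [map_pow]
    have hge : (1 : ℝ) ≤ ∑ i, (φ (w i)) ^ 2 := by
      have h1 := Finset.single_le_sum (f := fun i => (φ (w i)) ^ 2)
        (fun i _ => sq_nonneg _) (Finset.mem_univ j)
      simpa [hwj] using h1
    rw [← hsum] at hge
    linarith
  let fP : X ⟶ Proj 𝒜 := f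
  haveI : IsClosedImmersion fP := inferInstanceAs (IsClosedImmersion f)
  refine ⟨fP ⁻¹ᵁ V, hV.preimage fP, fun p => ?_⟩
  have hsub : Set.range p.base ⊆ Set.range (fP ⁻¹ᵁ V).ι.base := by
    rw [Scheme.Opens.range_ι]
    rintro _ ⟨z, rfl⟩
    show fP.base (p.base z) ∈ V
    have h := key (p ≫ fP) z
    exact h
  exact ⟨IsOpenImmersion.lift (fP ⁻¹ᵁ V).ι p hsub, IsOpenImmersion.lift_fac _ _ _⟩
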